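/- arXiv:2207.09479 — 6 statements merged into one kernel-verified Lean document; each statement's English description precedes it below -/
import Mathlib

section
/- Let ψ be a unit vector in ℂ^d. Let X be a finite family of pairs (c_x, A_x) where c_x > 0 and each A_x is a Hermitian d×d complex matrix with operator norm ‖A_x‖ ≤ 1, and define the cost 𝓜(X, ψ) = (∑_x c_x·√(1 − ⟨ψ, A_x ψ⟩²))². Suppose X' is obtained from X by replacing a single term (c, A) by two terms (c₀, B₀) and (c₁, B₁), where B₀, B₁ are Hermitian with ‖B₀‖, ‖B₁‖ ≤ 1, c₀, c₁ > 0, c·A = c₀·B₀ + c₁·B₁, and c₀ + c₁ = c (a norm-preserving sub-decomposition). Then 𝓜(X', ψ) ≤ 𝓜(X, ψ). -/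
/-
By Cauchy–Schwarz, every expectation value `a = ⟨ψ, A ψ⟩` of a contraction on a unit vector
lies in `[-1, 1]`, and `a ↦ √(1 - a²)` is concave there. Since the split is norm-preserving,
the expectation value of `A` is the `(c₀, c₁)`-weighted mean of those of `B₀` and `B₁`, so by
concavity the two new terms of the cost sum to at most the term they replace.
-/

open scoped Matrix Matrix.Norms.L2Operator

/-- The expectation value `⟨ψ, A ψ⟩` (real part) of a matrix `A` on a vector `ψ`. -/
noncomputable def expval {d : ℕ} (A : Matrix (Fin d) (Fin d) ℂ) (ψ : Fin d → ℂ) : ℝ :=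
  (star ψ ⬝ᵥ A.mulVec ψ).re

open Set Matrix WithLp

theorem ConcaveOn.sqrt {E : Type*} [AddCommGroup E] [Module ℝ E] {s : Set E} {f : E → ℝ}
    (hf : ConcaveOn ℝ s f) (hf₀ : ∀ x ∈ s, 0 ≤ f x) : ConcaveOn ℝ s (fun x => √(f x)) :=
  ⟨hf.1, fun x hx y hy _ _ ha hb hab =>
    (Real.strictConcaveOn_sqrt.concaveOn.2 (hf₀ x hx) (hf₀ y hy) ha hb hab).trans
      (Real.sqrt_le_sqrt (hf.2 hx hy ha hb hab))⟩

theorem concaveOn_sqrt_one_sub_sq : ConcaveOn ℝ (Icc (-1) 1) (fun t : ℝ => √(1 - t ^ 2)) := by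
  refine ConcaveOn.sqrt ?_ fun t ht => ?_
  · exact ((even_two.convexOn_pow.subset (subset_univ _) (convex_Icc _ _)).neg.add_const 1).congr
      fun t _ => by simp [sub_eq_neg_add]
  · nlinarith [ht.1, ht.2]

theorem ConcaveOn.mul_add_mul_le_mul {E : Type*} [AddCommGroup E] [Module ℝ E] {s : Set E}
    {f : E → ℝ} (hf : ConcaveOn ℝ s f) {a b e : E} {c₀ c₁ : ℝ} (ha : a ∈ s) (hb : b ∈ s)
    (hc₀ : 0 ≤ c₀) (hc₁ : 0 ≤ c₁) (hc : 0 < c₀ + c₁) (he : (c₀ + c₁) • e = c₀ • a + c₁ • b) :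
    c₀ * f a + c₁ * f b ≤ (c₀ + c₁) * f e := by
  have hw : c₀ / (c₀ + c₁) + c₁ / (c₀ + c₁) = 1 := by field_simp
  have hmean : (c₀ / (c₀ + c₁)) • a + (c₁ / (c₀ + c₁)) • b = e := by
    rw [div_eq_inv_mul, div_eq_inv_mul, mul_smul, mul_smul, ← smul_add, ← he, smul_smul,
      inv_mul_cancel₀ hc.ne', one_smul]
  have hjensen := hf.2 ha hb (by positivity) (by positivity) hw
  rw [hmean, smul_eq_mul, smul_eq_mul] at hjensen
  calc c₀ * f a + c₁ * f b = (c₀ + c₁) * (c₀ / (c₀ + c₁) * f a + c₁ / (c₀ + c₁) * f b) := by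
        field_simp
    _ ≤ (c₀ + c₁) * f e := by gcongr

lemma expval_smul {d : ℕ} (r : ℝ) (A : Matrix (Fin d) (Fin d) ℂ) (ψ : Fin d → ℂ) :
    expval (r • A) ψ = r * expval A ψ := by
  simp [expval, smul_mulVec, dotProduct_smul]

lemma expval_add {d : ℕ} (A B : Matrix (Fin d) (Fin d) ℂ) (ψ : Fin d → ℂ) :
    expval (A + B) ψ = expval A ψ + expval B ψ := by
  simp [expval, add_mulVec, dotProduct_add]

lemma expval_eq_re_inner {d : ℕ} (A : Matrix (Fin d) (Fin d) ℂ) (ψ : Fin d → ℂ) :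
    expval A ψ = RCLike.re (inner ℂ (toLp 2 ψ) (toEuclideanCLM (𝕜 := ℂ) A (toLp 2 ψ))) := by
  simp [expval, EuclideanSpace.inner_toLp_toLp, dotProduct_comm]

lemma norm_toLp_eq_one {n : Type*} [Fintype n] {ψ : n → ℂ} (hψ : star ψ ⬝ᵥ ψ = 1) :
    ‖(toLp 2 ψ : EuclideanSpace ℂ n)‖ = 1 := by
  have h : ‖(toLp 2 ψ : EuclideanSpace ℂ n)‖ ^ 2 = 1 := by
    rw [@norm_sq_eq_re_inner ℂ, EuclideanSpace.inner_toLp_toLp, dotProduct_comm, hψ]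
    simp
  exact (pow_eq_one_iff_of_nonneg (norm_nonneg _) two_ne_zero).mp h

lemma abs_expval_le {d : ℕ} (A : Matrix (Fin d) (Fin d) ℂ) (ψ : Fin d → ℂ) :
    |expval A ψ| ≤ ‖A‖ * ‖(toLp 2 ψ : EuclideanSpace ℂ (Fin d))‖ ^ 2 := by
  set x : EuclideanSpace ℂ (Fin d) := toLp 2 ψ
  set T := toEuclideanCLM (𝕜 := ℂ) A
  rw [expval_eq_re_inner, ← l2_opNorm_toEuclideanCLM]
  calc _ ≤ ‖inner ℂ x (T x)‖ := RCLike.abs_re_le_norm _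
    _ ≤ ‖x‖ * ‖T x‖ := norm_inner_le_norm _ _
    _ ≤ ‖x‖ * (‖T‖ * ‖x‖) := by gcongr; exact T.le_opNorm x
    _ = ‖T‖ * ‖x‖ ^ 2 := by ring

lemma expval_mem_Icc {d : ℕ} {A : Matrix (Fin d) (Fin d) ℂ} {ψ : Fin d → ℂ}
    (hψ : star ψ ⬝ᵥ ψ = 1) (hA : ‖A‖ ≤ 1) : expval A ψ ∈ Icc (-1) 1 := by
  have h := abs_expval_le A ψ
  rw [norm_toLp_eq_one hψ, one_pow, mul_one] at h
  exact abs_le.mp (h.trans hA)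

theorem stmt_2_general {d : ℕ} {ι : Type*} [Fintype ι] [DecidableEq ι]
    (ψ : Fin d → ℂ) (hψ : star ψ ⬝ᵥ ψ = 1)
    (c : ι → ℝ) (A : ι → Matrix (Fin d) (Fin d) ℂ)
    (hc : ∀ x, 0 < c x)
    (x₀ : ι) (c₀ c₁ : ℝ) (B₀ B₁ : Matrix (Fin d) (Fin d) ℂ)
    (hc₀ : 0 < c₀) (hc₁ : 0 < c₁)
    (hB₀n : ‖B₀‖ ≤ 1) (hB₁n : ‖B₁‖ ≤ 1)
    (hsplit : c x₀ • A x₀ = c₀ • B₀ + c₁ • B₁)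
    (hnp : c₀ + c₁ = c x₀) :
    ((∑ x ∈ Finset.univ.erase x₀, c x * Real.sqrt (1 - expval (A x) ψ ^ 2))
        + c₀ * Real.sqrt (1 - expval B₀ ψ ^ 2)
        + c₁ * Real.sqrt (1 - expval B₁ ψ ^ 2)) ^ 2
      ≤ (∑ x, c x * Real.sqrt (1 - expval (A x) ψ ^ 2)) ^ 2 := by
  have hmean : (c₀ + c₁) • expval (A x₀) ψ = c₀ • expval B₀ ψ + c₁ • expval B₁ ψ := by
    simp only [smul_eq_mul, hnp, ← expval_smul, ← expval_add, hsplit]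
  have hsplit_cost := concaveOn_sqrt_one_sub_sq.mul_add_mul_le_mul (expval_mem_Icc hψ hB₀n)
    (expval_mem_Icc hψ hB₁n) hc₀.le hc₁.le (by positivity) hmean
  rw [hnp] at hsplit_cost
  have hrest : 0 ≤ ∑ x ∈ Finset.univ.erase x₀, c x * Real.sqrt (1 - expval (A x) ψ ^ 2) :=
    Finset.sum_nonneg fun x _ => by have := hc x; positivity
  rw [← Finset.add_sum_erase _ _ (Finset.mem_univ x₀)]
  exact pow_le_pow_left₀ (by positivity) (by linarith) 2

/-- **Lemma 1** (norm-preserving sub-decompositions have non-increasing cost).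
If a single term `(c x₀, A x₀)` of a linear decomposition is replaced by two terms
`(c₀, B₀)` and `(c₁, B₁)` with `c x₀ • A x₀ = c₀ • B₀ + c₁ • B₁` and `c₀ + c₁ = c x₀`
(norm-preserving), then the cost `𝓜(X, ψ) = (∑_x c_x √(1 − ⟨ψ, A_x ψ⟩²))²` does not
increase, for any unit vector `ψ`.  (Norms are `ℓ²`-operator norms.) -/
theorem stmt_2 {d : ℕ} {ι : Type*} [Fintype ι] [DecidableEq ι]
    (ψ : Fin d → ℂ) (hψ : star ψ ⬝ᵥ ψ = 1)
    (c : ι → ℝ) (A : ι → Matrix (Fin d) (Fin d) ℂ)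
    (hc : ∀ x, 0 < c x) (hA : ∀ x, (A x).IsHermitian) (hAn : ∀ x, ‖A x‖ ≤ 1)
    (x₀ : ι) (c₀ c₁ : ℝ) (B₀ B₁ : Matrix (Fin d) (Fin d) ℂ)
    (hc₀ : 0 < c₀) (hc₁ : 0 < c₁)
    (hB₀ : B₀.IsHermitian) (hB₁ : B₁.IsHermitian)
    (hB₀n : ‖B₀‖ ≤ 1) (hB₁n : ‖B₁‖ ≤ 1)
    (hsplit : c x₀ • A x₀ = c₀ • B₀ + c₁ • B₁)
    (hnp : c₀ + c₁ = c x₀) :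
    ((∑ x ∈ Finset.univ.erase x₀, c x * Real.sqrt (1 - expval (A x) ψ ^ 2))
        + c₀ * Real.sqrt (1 - expval B₀ ψ ^ 2)
        + c₁ * Real.sqrt (1 - expval B₁ ψ ^ 2)) ^ 2
      ≤ (∑ x, c x * Real.sqrt (1 - expval (A x) ψ ^ 2)) ^ 2 :=
  stmt_2_general ψ hψ c A hc x₀ c₀ c₁ B₀ B₁ hc₀ hc₁ hB₀n hB₁n hsplit hnp
end

section
/- Let A be a Hermitian d×d complex matrix with ‖A‖ ≤ 1. Then the following are equivalent: (i) A² = I; (ii) for every representation c·A = c₀·B₀ + c₁·B₁ with c, c₀, c₁ > 0, c₀ + c₁ = c, and B₀, B₁ Hermitian with ‖B₀‖, ‖B₁‖ ≤ 1, one has B₀ = B₁ = A. -/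
open scoped Matrix Matrix.Norms.L2Operator

/-!
If `A² = 1`, the Hermitian matrix `A` is unitary, so `‖A x‖ = ‖x‖`, and
`c • A x = c₀ • B₀ x + c₁ • B₁ x` exhibits `A x` as a proper convex combination of two vectors
of norm at most `‖A x‖`; strict convexity of the Euclidean norm forces `B₀ x = B₁ x = A x`.

Conversely, `A` is the midpoint of `A ± ½ (1 - A²)`, which differ from `A` unless `A² = 1`.
For `|t| ≤ ½` the quadratic form of `A + t (1 - A²)` is `re ⟪A x, x⟫ + t (‖x‖² - ‖A x‖²)`,
and since `|re ⟪A x, x⟫| ≤ ‖A x‖ ‖x‖` and `‖A x‖ ≤ ‖x‖` it is bounded in absolute value by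
`‖A x‖ ‖x‖ + ½ (‖x‖² - ‖A x‖²) = ‖x‖² - ½ (‖x‖ - ‖A x‖)² ≤ ‖x‖²`.
-/

theorem eq_of_smul_eq_add_of_norm_le {E : Type*} [NormedAddCommGroup E] [NormedSpace ℝ E]
    [StrictConvexSpace ℝ E] {x y z : E} {c c₀ c₁ : ℝ} (hc₀ : 0 < c₀) (hc₁ : 0 < c₁)
    (hc : c₀ + c₁ = c) (hy : ‖y‖ ≤ ‖x‖) (hz : ‖z‖ ≤ ‖x‖) (h : c • x = c₀ • y + c₁ • z) :
    y = x ∧ z = x := by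
  have hc_pos : 0 < c := hc ▸ add_pos hc₀ hc₁
  have hx : x = (c₀ / c) • y + (c₁ / c) • z := by
    rw [div_eq_inv_mul, div_eq_inv_mul, mul_smul, mul_smul, ← smul_add, ← h,
      inv_smul_smul₀ hc_pos.ne']
  obtain rfl : y = z := by
    by_contra hne
    have hlt := norm_combo_lt_of_ne hy hz hne (div_pos hc₀ hc_pos) (div_pos hc₁ hc_pos)
      (by rw [← add_div, hc, div_self hc_pos.ne'])
    exact hlt.ne (congrArg norm hx.symm)
  rw [← add_smul, hc] at h
  have hyx := (smul_right_injective E hc_pos.ne' h).symm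
  exact ⟨hyx, hyx⟩

theorem IsSelfAdjoint.mem_unitary_of_sq_eq_one {R : Type*} [Monoid R] [StarMul R] {a : R}
    (ha : IsSelfAdjoint a) (h : a ^ 2 = 1) : a ∈ unitary R := by
  rw [Unitary.mem_iff, ha.star_eq, ← sq, h]
  exact ⟨rfl, rfl⟩

namespace LinearMap.IsSymmetric

open RCLike ContinuousLinearMap
open scoped InnerProductSpace

variable {𝕜 H : Type*} [RCLike 𝕜] [NormedAddCommGroup H] [InnerProductSpace 𝕜 H]
  {T : H →L[𝕜] H}

theorem norm_le_one_of_abs_re_inner_le (hT : (T : H →ₗ[𝕜] H).IsSymmetric)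
    (h : ∀ x, |re ⟪T x, x⟫_𝕜| ≤ ‖x‖ ^ 2) : ‖T‖ ≤ 1 := by
  rw [T.norm_eq_iSup_rayleighQuotient hT]
  refine ciSup_le fun x => ?_
  rw [rayleighQuotient, reApplyInnerSelf_apply, abs_div, abs_sq]
  exact div_le_one_of_le₀ (h x) (sq_nonneg _)

theorem re_inner_add_smul_one_sub_sq (hT : (T : H →ₗ[𝕜] H).IsSymmetric) (t : ℝ) (x : H) :
    re ⟪(T + (t : 𝕜) • (1 - T ^ 2) : H →L[𝕜] H) x, x⟫_𝕜 =
      re ⟪T x, x⟫_𝕜 + t * (‖x‖ ^ 2 - ‖T x‖ ^ 2) := by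
  have hTT : ⟪T (T x), x⟫_𝕜 = ⟪T x, T x⟫_𝕜 := hT (T x) x
  simp [pow_two, inner_add_left, inner_smul_left, inner_sub_left, hTT]

theorem norm_add_smul_one_sub_sq_le_one (hT : (T : H →ₗ[𝕜] H).IsSymmetric) (hTn : ‖T‖ ≤ 1)
    {t : ℝ} (ht : |t| ≤ 1 / 2) : ‖T + (t : 𝕜) • (1 - T ^ 2)‖ ≤ 1 := by
  have hS : ((T + (t : 𝕜) • (1 - T ^ 2) : H →L[𝕜] H) : H →ₗ[𝕜] H).IsSymmetric := by
    push_cast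
    exact hT.add ((LinearMap.IsSymmetric.one.sub (hT.pow 2)).smul (conj_ofReal t))
  refine hS.norm_le_one_of_abs_re_inner_le fun x => ?_
  rw [hT.re_inner_add_smul_one_sub_sq]
  have hTx : ‖T x‖ ≤ ‖x‖ := T.le_of_opNorm_le hTn x |>.trans_eq (one_mul _)
  have hCS : |re ⟪T x, x⟫_𝕜| ≤ ‖T x‖ * ‖x‖ :=
    (abs_re_le_norm _).trans (norm_inner_le_norm _ _)
  have hgap : 0 ≤ ‖x‖ ^ 2 - ‖T x‖ ^ 2 :=
    sub_nonneg.2 (pow_le_pow_left₀ (norm_nonneg _) hTx 2)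
  rw [abs_le] at ht hCS ⊢
  constructor <;> nlinarith [mul_nonneg (by linarith : 0 ≤ 1 / 2 + t) hgap,
    mul_nonneg (by linarith : 0 ≤ 1 / 2 - t) hgap, sq_nonneg (‖x‖ - ‖T x‖)]

end LinearMap.IsSymmetric

namespace Matrix

variable {𝕜 n : Type*} [RCLike 𝕜] [Fintype n] [DecidableEq n]

theorem toEuclideanCLM_real_smul (c : ℝ) (A : Matrix n n 𝕜) :
    toEuclideanCLM (n := n) (𝕜 := 𝕜) (c • A) =
      (c : 𝕜) • toEuclideanCLM (n := n) (𝕜 := 𝕜) A := by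
  rw [RCLike.real_smul_eq_coe_smul (K := 𝕜), map_smul]

theorem eq_of_smul_eq_add_of_mem_unitary {A B₀ B₁ : Matrix n n 𝕜}
    (hA : A ∈ unitary (Matrix n n 𝕜)) (hB₀ : ‖B₀‖ ≤ 1) (hB₁ : ‖B₁‖ ≤ 1) {c c₀ c₁ : ℝ}
    (hc₀ : 0 < c₀) (hc₁ : 0 < c₁) (hc : c₀ + c₁ = c) (h : c • A = c₀ • B₀ + c₁ • B₁) :
    B₀ = A ∧ B₁ = A := by
  have hA_isom x : ‖toEuclideanCLM (n := n) (𝕜 := 𝕜) A x‖ = ‖x‖ :=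
    ContinuousLinearMap.norm_map_of_mem_unitary (Unitary.map_mem _ hA) x
  have hB_le {B : Matrix n n 𝕜} (hB : ‖B‖ ≤ 1) x :
      ‖toEuclideanCLM (n := n) (𝕜 := 𝕜) B x‖ ≤ ‖toEuclideanCLM (n := n) (𝕜 := 𝕜) A x‖ := by
    rw [hA_isom]
    exact (toEuclideanCLM (n := n) (𝕜 := 𝕜) B).le_of_opNorm_le hB x |>.trans_eq (one_mul _)
  have hx x := eq_of_smul_eq_add_of_norm_le hc₀ hc₁ hc (hB_le hB₀ x) (hB_le hB₁ x) <| by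
    simpa only [map_add, toEuclideanCLM_real_smul, _root_.add_apply, _root_.smul_apply,
      ← RCLike.real_smul_eq_coe_smul] using congr(toEuclideanCLM (n := n) (𝕜 := 𝕜) $h x)
  have hinj := (toEuclideanCLM (n := n) (𝕜 := 𝕜)).injective
  exact ⟨hinj (ContinuousLinearMap.ext fun x => (hx x).1),
    hinj (ContinuousLinearMap.ext fun x => (hx x).2)⟩

theorem IsHermitian.add_smul_one_sub_sq {A : Matrix n n 𝕜} (hA : A.IsHermitian) (t : ℝ) :
    (A + t • (1 - A ^ 2)).IsHermitian :=
  hA.add ((isHermitian_one.sub (hA.pow 2)).smul (IsSelfAdjoint.all t))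

theorem IsHermitian.norm_add_smul_one_sub_sq_le_one {A : Matrix n n 𝕜} (hA : A.IsHermitian)
    (hAn : ‖A‖ ≤ 1) {t : ℝ} (ht : |t| ≤ 1 / 2) : ‖A + t • (1 - A ^ 2)‖ ≤ 1 := by
  have hT : ((toEuclideanCLM (n := n) (𝕜 := 𝕜) A :
      EuclideanSpace 𝕜 n →L[𝕜] EuclideanSpace 𝕜 n) :
        EuclideanSpace 𝕜 n →ₗ[𝕜] EuclideanSpace 𝕜 n).IsSymmetric := by
    rw [coe_toEuclideanCLM_eq_toEuclideanLin]
    exact isSymmetric_toEuclideanLin_iff.mpr hA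
  rw [cstar_norm_def, map_add, toEuclideanCLM_real_smul, map_sub, map_one, map_pow]
  exact hT.norm_add_smul_one_sub_sq_le_one hAn ht

end Matrix

/-- **Lemma 3**: a Hermitian matrix `A` with (`ℓ²`-operator) norm at most `1` is a
reflection (`A² = I`) if and only if every norm-preserving sub-decomposition
`c·A = c₀·B₀ + c₁·B₁` (with `c₀, c₁ > 0`, `c₀ + c₁ = c`, and `B₀, B₁` Hermitian of norm
at most `1`) is trivial, i.e. `B₀ = B₁ = A`. -/
theorem stmt_4 {d : ℕ} (A : Matrix (Fin d) (Fin d) ℂ)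
    (hA : A.IsHermitian) (hAn : ‖A‖ ≤ 1) :
    A ^ 2 = 1 ↔
      ∀ (c c₀ c₁ : ℝ) (B₀ B₁ : Matrix (Fin d) (Fin d) ℂ),
        0 < c → 0 < c₀ → 0 < c₁ → c₀ + c₁ = c →
        B₀.IsHermitian → B₁.IsHermitian → ‖B₀‖ ≤ 1 → ‖B₁‖ ≤ 1 →
        c • A = c₀ • B₀ + c₁ • B₁ →
        B₀ = A ∧ B₁ = A := by
  constructor
  · intro hA2 c c₀ c₁ B₀ B₁ _ hc₀ hc₁ hc _ _ hB₀ hB₁ h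
    exact Matrix.eq_of_smul_eq_add_of_mem_unitary (hA.isSelfAdjoint.mem_unitary_of_sq_eq_one hA2)
      hB₀ hB₁ hc₀ hc₁ hc h
  · intro h
    set B : ℝ → Matrix (Fin d) (Fin d) ℂ := fun t => A + t • (1 - A ^ 2)
    have hB_le {t : ℝ} (ht : |t| ≤ 1 / 2) : ‖B t‖ ≤ 1 :=
      hA.norm_add_smul_one_sub_sq_le_one hAn ht
    have hmid : (2 : ℝ) • A = (1 : ℝ) • B (1 / 2) + (1 : ℝ) • B (-(1 / 2)) := by
      simp only [B]
      module
    have hB_eq : B (1 / 2) = A := (h 2 1 1 _ _ two_pos one_pos one_pos one_add_one_eq_two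
      (hA.add_smul_one_sub_sq _) (hA.add_smul_one_sub_sq _) (hB_le (by norm_num))
      (hB_le (by norm_num)) hmid).1
    have hD : (1 : Matrix (Fin d) (Fin d) ℂ) = A ^ 2 := by
      simpa [B, smul_eq_zero, sub_eq_zero] using hB_eq
    exact hD.symm
end

section
/- Let A, B₀, B₁ be Hermitian d×d complex matrices with A² = I and ‖B₀‖ ≤ 1, ‖B₁‖ ≤ 1. Let c₀, c₁ > 0 and suppose (c₀ + c₁)·A = c₀·B₀ + c₁·B₁. Then B₀ = A and B₁ = A. -/
open scoped Matrix Matrix.Norms.L2Operator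

/-!
Euclidean space is strictly convex, so a vector of norm `r` is not a nontrivial convex
combination of two distinct vectors of norm `≤ r`. An involution `S` splits every
vector as `p + q` with `S p = p` and `S q = -q`; on such `p` and `q` the operator `S` preserves
norms, so evaluating `(c₀ + c₁) • S = c₀ • T₀ + c₁ • T₁` there forces both contractions `Tᵢ` to
agree with `S`.
-/

section StrictConvex

variable {E : Type*} [NormedAddCommGroup E] [NormedSpace ℝ E] [StrictConvexSpace ℝ E]

theorem eq_of_smul_add_smul_eq_of_norm_le {v w₀ w₁ : E} {c₀ c₁ : ℝ} (hc₀ : 0 < c₀)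
    (hc₁ : 0 < c₁) (hw₀ : ‖w₀‖ ≤ ‖v‖) (hw₁ : ‖w₁‖ ≤ ‖v‖)
    (h : (c₀ + c₁) • v = c₀ • w₀ + c₁ • w₁) : w₀ = v ∧ w₁ = v := by
  have hc : c₀ + c₁ ≠ 0 := by positivity
  have hv : v = (c₀ / (c₀ + c₁)) • w₀ + (c₁ / (c₀ + c₁)) • w₁ := by
    rw [div_eq_inv_mul, div_eq_inv_mul, mul_smul, mul_smul, ← smul_add, ← h, smul_smul,
      inv_mul_cancel₀ hc, one_smul]
  have hw : w₀ = w₁ := by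
    by_contra hne
    have := norm_combo_lt_of_ne (a := c₀ / (c₀ + c₁)) (b := c₁ / (c₀ + c₁)) hw₀ hw₁ hne
      (by positivity) (by positivity) (by field_simp)
    rw [← hv] at this
    exact lt_irrefl _ this
  subst hw
  rw [← add_smul] at h
  exact ⟨(smul_right_injective E hc h).symm, (smul_right_injective E hc h).symm⟩

namespace ContinuousLinearMap

variable {S T₀ T₁ : E →L[ℝ] E} {c₀ c₁ : ℝ}

theorem apply_eq_of_smul_eq_smul_add_smul (hc₀ : 0 < c₀) (hc₁ : 0 < c₁) (hT₀ : ‖T₀‖ ≤ 1)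
    (hT₁ : ‖T₁‖ ≤ 1) (h : (c₀ + c₁) • S = c₀ • T₀ + c₁ • T₁) {x : E} (hx : ‖S x‖ = ‖x‖) :
    T₀ x = S x ∧ T₁ x = S x := by
  refine eq_of_smul_add_smul_eq_of_norm_le hc₀ hc₁ ?_ ?_ (by simpa using congr($h x))
  · exact hx ▸ (T₀.le_of_opNorm_le hT₀ x).trans_eq (one_mul _)
  · exact hx ▸ (T₁.le_of_opNorm_le hT₁ x).trans_eq (one_mul _)

theorem eq_of_involutive_of_smul_eq_smul_add_smul (hS : Function.Involutive S) (hc₀ : 0 < c₀)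
    (hc₁ : 0 < c₁) (hT₀ : ‖T₀‖ ≤ 1) (hT₁ : ‖T₁‖ ≤ 1)
    (h : (c₀ + c₁) • S = c₀ • T₀ + c₁ • T₁) : T₀ = S ∧ T₁ = S := by
  have hagree (x : E) : T₀ x = S x ∧ T₁ x = S x := by
    set p : E := (2 : ℝ)⁻¹ • (x + S x)
    set q : E := (2 : ℝ)⁻¹ • (x - S x)
    have hp : S p = p := by simp only [p, map_smul, map_add, hS x, add_comm]
    have hq : S q = -q := by simp only [q, map_smul, map_sub, hS x, ← smul_neg, neg_sub]
    have hx : x = p + q := by simp only [p, q]; module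
    obtain ⟨hp₀, hp₁⟩ := apply_eq_of_smul_eq_smul_add_smul hc₀ hc₁ hT₀ hT₁ h (x := p)
      (by rw [hp])
    obtain ⟨hq₀, hq₁⟩ := apply_eq_of_smul_eq_smul_add_smul hc₀ hc₁ hT₀ hT₁ h (x := q)
      (by rw [hq, norm_neg])
    rw [hx, map_add, map_add, map_add, hp₀, hp₁, hq₀, hq₁]
    exact ⟨rfl, rfl⟩
  exact ⟨ext fun x => (hagree x).1, ext fun x => (hagree x).2⟩

end ContinuousLinearMap

end StrictConvex

open Matrix in
theorem stmt_5_general {d : ℕ} (A B₀ B₁ : Matrix (Fin d) (Fin d) ℂ)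
    (hA2 : A ^ 2 = 1)
    (hB₀n : ‖B₀‖ ≤ 1) (hB₁n : ‖B₁‖ ≤ 1)
    (c₀ c₁ : ℝ) (hc₀ : 0 < c₀) (hc₁ : 0 < c₁)
    (hsplit : (c₀ + c₁) • A = c₀ • B₀ + c₁ • B₁) :
    B₀ = A ∧ B₁ = A := by
  let toCLM (M : Matrix (Fin d) (Fin d) ℂ) :=
    (toEuclideanCLM (n := Fin d) (𝕜 := ℂ) M).restrictScalars ℝ
  have hinj : Function.Injective toCLM := fun M N hMN =>
    toEuclideanCLM.injective (ContinuousLinearMap.ext fun x => congr($hMN x))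
  have hsmul (c : ℝ) (M : Matrix (Fin d) (Fin d) ℂ) : toCLM (c • M) = c • toCLM M := by
    ext1 x
    simp [toCLM, ← Complex.coe_smul]
  have hS : Function.Involutive (toCLM A) := fun x => by
    simpa [toCLM, pow_two] using congr(toEuclideanCLM (n := Fin d) (𝕜 := ℂ) $hA2 x)
  have h : (c₀ + c₁) • toCLM A = c₀ • toCLM B₀ + c₁ • toCLM B₁ := by
    rw [← hsmul, ← hsmul, ← hsmul, hsplit]
    ext1 x
    simp [toCLM]
  obtain ⟨h₀, h₁⟩ := ContinuousLinearMap.eq_of_involutive_of_smul_eq_smul_add_smul hS hc₀ hc₁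
    (by simpa [toCLM, cstar_norm_def] using hB₀n) (by simpa [toCLM, cstar_norm_def] using hB₁n) h
  exact ⟨hinj h₀, hinj h₁⟩

/-- Rigidity of reflections: if `A` is Hermitian with `A² = I`, `B₀, B₁` are Hermitian
with (`ℓ²`-operator) norm at most `1`, `c₀, c₁ > 0`, and
`(c₀ + c₁)·A = c₀·B₀ + c₁·B₁`, then `B₀ = A` and `B₁ = A`. -/
theorem stmt_5 {d : ℕ} (A B₀ B₁ : Matrix (Fin d) (Fin d) ℂ)
    (hA : A.IsHermitian) (hA2 : A ^ 2 = 1)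
    (hB₀ : B₀.IsHermitian) (hB₁ : B₁.IsHermitian)
    (hB₀n : ‖B₀‖ ≤ 1) (hB₁n : ‖B₁‖ ≤ 1)
    (c₀ c₁ : ℝ) (hc₀ : 0 < c₀) (hc₁ : 0 < c₁)
    (hsplit : (c₀ + c₁) • A = c₀ • B₀ + c₁ • B₁) :
    B₀ = A ∧ B₁ = A :=
  stmt_5_general A B₀ B₁ hA2 hB₀n hB₁n c₀ c₁ hc₀ hc₁ hsplit
end

section
/- Let O be a Hermitian d×d complex matrix with distinct eigenvalues λ₀ < λ₁ < ... < λ_{J−1} and corresponding spectral projectors Π₀, ..., Π_{J−1} (so O = ∑_j λ_j Π_j and ∑_j Π_j = I). Define Ξ_x = I − 2·∑_{j<x} Π_j for x = 1, ..., J−1. Then each Ξ_x is Hermitian with Ξ_x² = I, and O = ((λ₀ + λ_{J−1})/2)·I + ∑_{x=1}^{J−1} ((λ_x − λ_{x−1})/2)·Ξ_x. -/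
open scoped Matrix

lemma xi_swap {M : Type*} [AddCommMonoid M] (n : ℕ) (f : ℕ → ℕ → M) :
    ∑ x ∈ Finset.range n, ∑ j ∈ Finset.range x, f x j
      = ∑ j ∈ Finset.range n, ∑ x ∈ Finset.Ico (j+1) n, f x j := by
  induction n with
  | zero => simp
  | succ n ih =>
    rw [Finset.sum_range_succ, ih, Finset.sum_range_succ]
    have h : ∀ j ∈ Finset.range n, ∑ x ∈ Finset.Ico (j+1) (n+1), f x j
        = ∑ x ∈ Finset.Ico (j+1) n, f x j + f n j := fun j hj =>
      Finset.sum_Ico_succ_top (Nat.succ_le_of_lt (Finset.mem_range.mp hj)) _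
    rw [Finset.sum_congr rfl h, Finset.sum_add_distrib]
    simp

lemma xi_tele (f : ℕ → ℝ) (a : ℕ) : ∀ b, a < b →
    ∑ x ∈ Finset.Ico (a+1) b, (f x - f (x-1)) = f (b-1) - f a := by
  intro b
  induction b with
  | zero => omega
  | succ b ih =>
    intro h
    rcases Nat.lt_or_ge a b with h' | h'
    · rw [Finset.sum_Ico_succ_top (by omega), ih h']
      simp only [Nat.add_sub_cancel]
      ring
    · have : a = b := by omega
      subst this
      simp

/-- The Ξ-decomposition: let `O` be Hermitian with distinct eigenvalues
`λ₀ < λ₁ < ... < λ_{J−1}` and spectral projectors `Π₀, ..., Π_{J−1}`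
(`O = ∑_j λ_j Π_j`, `∑_j Π_j = I`, `Π_j Π_k = δ_{jk} Π_j`, each `Π_j` Hermitian).
Define `Ξ_x = I − 2·∑_{j<x} Π_j`. Then each `Ξ_x` (`1 ≤ x ≤ J−1`) is Hermitian with
`Ξ_x² = I`, and `O = ((λ₀ + λ_{J−1})/2)·I + ∑_{x=1}^{J−1} ((λ_x − λ_{x−1})/2)·Ξ_x`. -/
theorem stmt_14 {d : ℕ} (J : ℕ) (hJ : 0 < J)
    (O : Matrix (Fin d) (Fin d) ℂ) (hO : O.IsHermitian)
    (lam : ℕ → ℝ) (P : ℕ → Matrix (Fin d) (Fin d) ℂ)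
    (hlam : ∀ j, j + 1 < J → lam j < lam (j + 1))
    (hPh : ∀ j < J, (P j).IsHermitian)
    (hPo : ∀ j < J, ∀ k < J, P j * P k = if j = k then P j else 0)
    (hPsum : ∑ j ∈ Finset.range J, P j = 1)
    (hOspec : O = ∑ j ∈ Finset.range J, lam j • P j)
    (Xi : ℕ → Matrix (Fin d) (Fin d) ℂ)
    (hXi : ∀ x, Xi x = 1 - 2 • ∑ j ∈ Finset.range x, P j) :
    (∀ x, 1 ≤ x → x < J → (Xi x).IsHermitian ∧ Xi x ^ 2 = 1) ∧
    O = ((lam 0 + lam (J - 1)) / 2) • (1 : Matrix (Fin d) (Fin d) ℂ)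
        + ∑ x ∈ Finset.Ico 1 J, ((lam x - lam (x - 1)) / 2) • Xi x := by
  constructor
  · intro x hx1 hx2
    set Q : Matrix (Fin d) (Fin d) ℂ := ∑ j ∈ Finset.range x, P j with hQ
    have hQH : Qᴴ = Q := by
      rw [hQ, Matrix.conjTranspose_sum]
      exact Finset.sum_congr rfl fun j hj =>
        hPh j (lt_trans (Finset.mem_range.mp hj) hx2)
    have hQQ : Q * Q = Q := by
      rw [hQ, Finset.sum_mul_sum]
      refine Finset.sum_congr rfl fun j hj => ?_
      have hjJ : j < J := lt_trans (Finset.mem_range.mp hj) hx2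
      have : ∀ k ∈ Finset.range x, P j * P k = if j = k then P j else 0 :=
        fun k hk => hPo j hjJ k (lt_trans (Finset.mem_range.mp hk) hx2)
      rw [Finset.sum_congr rfl this, Finset.sum_ite_eq _ j, if_pos hj]
    have hXix : Xi x = 1 - (Q + Q) := by rw [hXi, two_smul, hQ]
    constructor
    · show (Xi x)ᴴ = Xi x
      rw [hXix, Matrix.conjTranspose_sub, Matrix.conjTranspose_add,
        Matrix.conjTranspose_one, hQH]
    · have expand : (1 - (Q+Q)) * (1 - (Q+Q))
          = 1 - (Q+Q) - (Q+Q) + (Q*Q + Q*Q + (Q*Q + Q*Q)) := by noncomm_ring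
      rw [hXix, sq, expand, hQQ]
      abel
  · -- decomposition
    have step1 : ∀ x ∈ Finset.Ico 1 J,
        ((lam x - lam (x-1))/2) • Xi x
          = ((lam x - lam (x-1))/2) • (1 : Matrix (Fin d) (Fin d) ℂ)
            - ∑ j ∈ Finset.range x, (lam x - lam (x-1)) • P j := by
      intro x hx
      rw [hXi, smul_sub, ← Nat.cast_smul_eq_nsmul ℝ, smul_smul, Finset.smul_sum]
      congr 1
      refine Finset.sum_congr rfl fun j hj => ?_
      congr 1
      push_cast
      ring
    rw [Finset.sum_congr rfl step1, Finset.sum_sub_distrib, ← Finset.sum_smul]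
    have htel1 : ∑ x ∈ Finset.Ico 1 J, (lam x - lam (x-1))/2
        = lam (J-1)/2 - lam 0/2 := by
      have := xi_tele (fun x => lam x / 2) 0 J hJ
      simpa [sub_div] using this
    have hswap : ∑ x ∈ Finset.Ico 1 J, ∑ j ∈ Finset.range x,
          (lam x - lam (x-1)) • P j
        = ∑ j ∈ Finset.range J, (lam (J-1) - lam j) • P j := by
      have h0 : ∑ x ∈ Finset.Ico 1 J, ∑ j ∈ Finset.range x,
            (lam x - lam (x-1)) • P j
          = ∑ x ∈ Finset.range J, ∑ j ∈ Finset.range x,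
            (lam x - lam (x-1)) • P j := by
        rw [Finset.range_eq_Ico, Finset.sum_eq_sum_Ico_succ_bot hJ]
        simp
      rw [h0, xi_swap]
      refine Finset.sum_congr rfl fun j hj => ?_
      rw [← Finset.sum_smul, xi_tele lam j J (Finset.mem_range.mp hj)]
    rw [hswap, htel1, hOspec]
    have hsplit : ∑ j ∈ Finset.range J, (lam (J-1) - lam j) • P j
        = lam (J-1) • (1 : Matrix (Fin d) (Fin d) ℂ)
          - ∑ j ∈ Finset.range J, lam j • P j := by
      rw [← hPsum, Finset.smul_sum, ← Finset.sum_sub_distrib]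
      exact Finset.sum_congr rfl fun j hj => by rw [sub_smul]
    rw [hsplit]
    module
end

section
/- Let O be a Hermitian d×d complex matrix with distinct eigenvalues λ₀ < ... < λ_{J−1}, spectral projectors Π_j, and Ξ-decomposition with reflections Ξ_x = I − 2∑_{j<x} Π_j and coefficients c_x = (λ_x − λ_{x−1})/2. Let ψ be a unit vector supported on at most two eigenspaces of O, i.e. ψ = α·φ_m + β·φ_n where φ_m, φ_n are unit eigenvectors with eigenvalues λ_m, λ_n (m ≤ n) and |α|² + |β|² = 1. Then (∑_{x=1}^{J−1} c_x·√(1 − ⟨ψ, Ξ_x ψ⟩²))² = ⟨ψ, O² ψ⟩ − ⟨ψ, O ψ⟩² = |α|²·|β|²·(λ_n − λ_m)². -/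
/-!
The eigenvectors `φ_m`, `φ_n` of `O` lie in single spectral subspaces, so they are eigenvectors of
`O`, `O²` and every reflection `Ξ_x` (with eigenvalue `-1` or `1` according as the eigenspace lies
below `x` or not), and they are orthogonal when `m ≠ n`. Every such expectation on `ψ` is therefore
the two-point average `|α|² a_m + |β|² a_n` of the eigenvalues. In particular `⟨Ξ_x⟩ = ±1` unless
`m < x ≤ n`, where `⟨Ξ_x⟩ = |β|² - |α|²` and `√(1 - ⟨Ξ_x⟩²) = 2|α||β|`; the cost then telescopes to
`|α||β|(λ_n - λ_m)`, whose square is the two-point variance.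
-/

open scoped Matrix

open Matrix Finset

theorem Matrix.IsHermitian.dotProduct_eq_zero_of_mulVec_eq_smul {ι : Type*} [Fintype ι]
    {A : Matrix ι ι ℂ} (hA : A.IsHermitian) {u v : ι → ℂ} {a b : ℝ}
    (hu : A *ᵥ u = a • u) (hv : A *ᵥ v = b • v) (hab : a ≠ b) : star u ⬝ᵥ v = 0 := by
  have h : a • (star u ⬝ᵥ v) = b • (star u ⬝ᵥ v) :=
    calc a • (star u ⬝ᵥ v) = star (A *ᵥ u) ⬝ᵥ v := by
          rw [hu, star_smul, star_trivial a, smul_dotProduct]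
      _ = star u ⬝ᵥ A *ᵥ v := by rw [star_mulVec, hA.eq, dotProduct_mulVec]
      _ = b • (star u ⬝ᵥ v) := by rw [hv, dotProduct_smul]
  rwa [← sub_eq_zero, ← sub_smul, smul_eq_zero, sub_eq_zero, or_iff_right hab] at h

section Spectral

variable {ι : Type*} [Fintype ι] [DecidableEq ι] {J : ℕ} {lam : ℕ → ℝ}
  {P : ℕ → Matrix ι ι ℂ}

theorem mul_sum_smul_of_orthogonal (hPo : ∀ j < J, ∀ k < J, P j * P k = if j = k then P j else 0)
    {k : ℕ} (hk : k < J) : P k * ∑ j ∈ range J, lam j • P j = lam k • P k := by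
  rw [mul_sum, sum_eq_single_of_mem k (mem_range.mpr hk)]
  · rw [mul_smul_comm, hPo k hk k hk, if_pos rfl]
  · intro j hj hjk
    rw [mul_smul_comm, hPo k hk j (mem_range.mp hj), if_neg (Ne.symm hjk), smul_zero]

theorem mulVec_eq_ite_of_mulVec_eq_smul (hlam : Set.InjOn lam (Set.Iio J))
    (hPo : ∀ j < J, ∀ k < J, P j * P k = if j = k then P j else 0)
    (hPsum : ∑ j ∈ range J, P j = 1) {φ : ι → ℂ} {t : ℕ} (ht : t < J)
    (hφ : (∑ j ∈ range J, lam j • P j) *ᵥ φ = lam t • φ) {j : ℕ} (hj : j < J) :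
    P j *ᵥ φ = if j = t then φ else 0 := by
  have hne : ∀ k < J, k ≠ t → P k *ᵥ φ = 0 := by
    intro k hk hkt
    have h : lam k • (P k *ᵥ φ) = lam t • (P k *ᵥ φ) := by
      rw [← smul_mulVec, ← mul_sum_smul_of_orthogonal hPo hk, ← mulVec_mulVec, hφ, mulVec_smul]
    have hlkt : lam k ≠ lam t := fun h => hkt (hlam hk ht h)
    rwa [← sub_eq_zero, ← sub_smul, smul_eq_zero, sub_eq_zero, or_iff_right hlkt] at h
  split_ifs with hjt
  · subst hjt
    calc P j *ᵥ φ = ∑ k ∈ range J, P k *ᵥ φ := by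
          rw [sum_eq_single_of_mem j (mem_range.mpr hj)]
          exact fun k hk hkj => hne k (mem_range.mp hk) hkj
      _ = φ := by rw [← sum_mulVec, hPsum, one_mulVec]
  · exact hne j hj hjt

/-- The eigenvalue of the reflection `Ξ_x` on the `t`-th eigenspace. -/
def reflectionEigenvalue (t x : ℕ) : ℝ := if t < x then -1 else 1

theorem reflection_mulVec_of_mulVec_eq_ite {φ : ι → ℂ} {t x : ℕ}
    (hproj : ∀ j < J, P j *ᵥ φ = if j = t then φ else 0) (hx : x ≤ J) :
    (1 - 2 • ∑ j ∈ range x, P j) *ᵥ φ = reflectionEigenvalue t x • φ := by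
  have hsum : (∑ j ∈ range x, P j) *ᵥ φ = if t < x then φ else 0 := by
    rw [sum_mulVec, sum_congr rfl fun j hj => hproj j ((mem_range.mp hj).trans_le hx)]
    simp [sum_ite_eq']
  rw [sub_mulVec, one_mulVec, smul_mulVec, hsum, reflectionEigenvalue]
  split_ifs <;> module

end Spectral

theorem expval_smul_add_smul {d : ℕ} {A : Matrix (Fin d) (Fin d) ℂ} {u v : Fin d → ℂ} {a b : ℝ}
    (hu : star u ⬝ᵥ u = 1) (hv : star v ⬝ᵥ v = 1) (huv : star u ⬝ᵥ v = 0)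
    (hAu : A *ᵥ u = a • u) (hAv : A *ᵥ v = b • v) (α β : ℂ) :
    expval A (α • u + β • v) = ‖α‖ ^ 2 * a + ‖β‖ ^ 2 * b := by
  have hvu : star v ⬝ᵥ u = 0 := by rw [star_dotProduct, huv, star_zero]
  rw [expval, mulVec_add, mulVec_smul, mulVec_smul, hAu, hAv]
  simp only [star_add, star_smul, RCLike.star_def, dotProduct_add, dotProduct_smul, add_dotProduct,
    smul_dotProduct, hu, hv, huv, hvu, smul_eq_mul, mul_one, mul_zero, add_zero, zero_add,
    Complex.real_smul, Complex.add_re, Complex.mul_re, Complex.ofReal_re, Complex.conj_re,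
    Complex.ofReal_im, Complex.conj_im, Complex.mul_im]
  rw [Complex.sq_norm, Complex.sq_norm, Complex.normSq_apply, Complex.normSq_apply]
  ring

theorem expval_of_mulVec_eq_smul {d : ℕ} {A : Matrix (Fin d) (Fin d) ℂ} {ψ : Fin d → ℂ} {a : ℝ}
    (hψ : star ψ ⬝ᵥ ψ = 1) (hA : A *ᵥ ψ = a • ψ) : expval A ψ = a := by
  rw [expval, hA, dotProduct_smul, hψ]
  simp

theorem expval_smul_add_smul_of_isHermitian {d : ℕ} {O A : Matrix (Fin d) (Fin d) ℂ}
    (hO : O.IsHermitian) {u v : Fin d → ℂ} {a b a' b' : ℝ}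
    (hu : star u ⬝ᵥ u = 1) (hv : star v ⬝ᵥ v = 1) (hOu : O *ᵥ u = a • u) (hOv : O *ᵥ v = b • v)
    (hAu : A *ᵥ u = a' • u) (hAv : A *ᵥ v = b' • v) (hab : a = b → a' = b') {α β : ℂ}
    (hαβ : ‖α‖ ^ 2 + ‖β‖ ^ 2 = 1) (hψ : star (α • u + β • v) ⬝ᵥ (α • u + β • v) = 1) :
    expval A (α • u + β • v) = ‖α‖ ^ 2 * a' + ‖β‖ ^ 2 * b' := by
  by_cases heq : a = b
  · obtain rfl := hab heq
    have hAψ : A *ᵥ (α • u + β • v) = a' • (α • u + β • v) := by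
      rw [mulVec_add, mulVec_smul, mulVec_smul, hAu, hAv, smul_comm α, smul_comm β, smul_add]
    rw [expval_of_mulVec_eq_smul hψ hAψ, ← add_mul, hαβ, one_mul]
  · exact expval_smul_add_smul hu hv (hO.dotProduct_eq_zero_of_mulVec_eq_smul hOu hOv heq) hAu hAv
      α β

theorem two_point_variance {p q : ℝ} (x y : ℝ) (h : p + q = 1) :
    p * x ^ 2 + q * y ^ 2 - (p * x + q * y) ^ 2 = p * q * (y - x) ^ 2 := by
  linear_combination (-(p * x ^ 2 + q * y ^ 2)) * h

theorem sum_sqrt_one_sub_sq_two_point (lam : ℕ → ℝ) {p q : ℝ} (hp : 0 ≤ p) (hq : 0 ≤ q)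
    (h : p + q = 1) {m n J : ℕ} (hmn : m ≤ n) (hn : n < J) :
    ∑ x ∈ Ico 1 J, (lam x - lam (x - 1)) / 2 *
        √(1 - (p * reflectionEigenvalue m x + q * reflectionEigenvalue n x) ^ 2)
      = √(p * q) * (lam n - lam m) := by
  set term := fun x => (lam x - lam (x - 1)) / 2 *
    √(1 - (p * reflectionEigenvalue m x + q * reflectionEigenvalue n x) ^ 2)
  have hsub : Ico (m + 1) (n + 1) ⊆ Ico 1 J := by
    intro x hx
    simp only [mem_Ico] at hx ⊢
    omega
  have hout : ∀ x ∈ Ico 1 J, x ∉ Ico (m + 1) (n + 1) → term x = 0 := by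
    intro x _ hx
    have : 1 - (p * reflectionEigenvalue m x + q * reflectionEigenvalue n x) ^ 2 = 0 := by
      rw [mem_Ico, not_and_or, not_le, not_lt] at hx
      rcases hx with hx | hx
      · rw [reflectionEigenvalue, reflectionEigenvalue, if_neg (by omega), if_neg (by omega)]
        linear_combination (-(1 + p + q)) * h
      · rw [reflectionEigenvalue, reflectionEigenvalue, if_pos (by omega), if_pos (by omega)]
        linear_combination (-(1 + p + q)) * h
    simp only [term, this, Real.sqrt_zero, mul_zero]
  have hin : ∀ x ∈ Ico m n, term (x + 1) = √(p * q) * (lam (x + 1) - lam x) := by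
    intro x hx
    rw [mem_Ico] at hx
    have h4pq : 1 - (p * reflectionEigenvalue m (x + 1) + q * reflectionEigenvalue n (x + 1)) ^ 2
        = (2 * √(p * q)) ^ 2 := by
      rw [reflectionEigenvalue, reflectionEigenvalue, if_pos (by omega), if_neg (by omega),
        mul_pow, Real.sq_sqrt (mul_nonneg hp hq)]
      linear_combination (-(1 + p + q)) * h
    simp only [term, h4pq, Real.sqrt_sq (by positivity : 0 ≤ 2 * √(p * q)), Nat.add_sub_cancel]
    ring
  calc ∑ x ∈ Ico 1 J, term x = ∑ x ∈ Ico (m + 1) (n + 1), term x := (sum_subset hsub hout).symm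
    _ = ∑ x ∈ Ico m n, term (x + 1) := (sum_Ico_add' term m n 1).symm
    _ = √(p * q) * (lam n - lam m) := by
      rw [sum_congr rfl hin, ← mul_sum, sum_Ico_sub lam hmn]

theorem stmt_15_general {d : ℕ} (J : ℕ)
    (O : Matrix (Fin d) (Fin d) ℂ) (hO : O.IsHermitian)
    (lam : ℕ → ℝ) (P : ℕ → Matrix (Fin d) (Fin d) ℂ)
    (hlam : ∀ j, j + 1 < J → lam j < lam (j + 1))
    (hPo : ∀ j < J, ∀ k < J, P j * P k = if j = k then P j else 0)
    (hPsum : ∑ j ∈ Finset.range J, P j = 1)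
    (hOspec : O = ∑ j ∈ Finset.range J, lam j • P j)
    (Xi : ℕ → Matrix (Fin d) (Fin d) ℂ)
    (hXi : ∀ x, Xi x = 1 - 2 • ∑ j ∈ Finset.range x, P j)
    (m n : ℕ) (hmn : m ≤ n) (hn : n < J)
    (φm φn : Fin d → ℂ)
    (hφm : star φm ⬝ᵥ φm = 1) (hφn : star φn ⬝ᵥ φn = 1)
    (hφmEig : O.mulVec φm = lam m • φm) (hφnEig : O.mulVec φn = lam n • φn)
    (α β : ℂ) (hαβ : ‖α‖ ^ 2 + ‖β‖ ^ 2 = 1)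
    (ψ : Fin d → ℂ) (hψdef : ψ = α • φm + β • φn) (hψ : star ψ ⬝ᵥ ψ = 1) :
    (∑ x ∈ Finset.Ico 1 J,
        ((lam x - lam (x - 1)) / 2) * Real.sqrt (1 - expval (Xi x) ψ ^ 2)) ^ 2
      = (star ψ ⬝ᵥ (O * O).mulVec ψ).re - (star ψ ⬝ᵥ O.mulVec ψ).re ^ 2 ∧
    (star ψ ⬝ᵥ (O * O).mulVec ψ).re - (star ψ ⬝ᵥ O.mulVec ψ).re ^ 2
      = ‖α‖ ^ 2 * ‖β‖ ^ 2 * (lam n - lam m) ^ 2 := by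
  have hinj : Set.InjOn lam (Set.Iio J) := fun i hi j hj =>
    (strictMonoOn_Iic_of_lt_succ (n := J - 1) fun k hk => hlam k (by omega)).injOn
      (Nat.le_sub_one_of_lt hi) (Nat.le_sub_one_of_lt hj)
  have hXiEig : ∀ {φ t}, t < J → O *ᵥ φ = lam t • φ →
      ∀ x ≤ J, Xi x *ᵥ φ = reflectionEigenvalue t x • φ := fun ht hφ x hx => by
    rw [hXi, reflection_mulVec_of_mulVec_eq_ite
      (fun j hj => mulVec_eq_ite_of_mulVec_eq_smul hinj hPo hPsum ht (hOspec ▸ hφ) hj) hx]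
  have hOsqEig : ∀ {φ t}, O *ᵥ φ = lam t • φ → (O * O) *ᵥ φ = (lam t ^ 2) • φ := fun hφ => by
    rw [← mulVec_mulVec, hφ, mulVec_smul, hφ, smul_smul, sq]
  have hE : ∀ (A : Matrix (Fin d) (Fin d) ℂ) (f : ℕ → ℝ), A *ᵥ φm = f m • φm →
      A *ᵥ φn = f n • φn → expval A ψ = ‖α‖ ^ 2 * f m + ‖β‖ ^ 2 * f n := fun A f hAm hAn => by
    subst hψdef
    exact expval_smul_add_smul_of_isHermitian hO hφm hφn hφmEig hφnEig hAm hAn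
      (fun h => congrArg f (hinj (hmn.trans_lt hn) hn h)) hαβ hψ
  have hvar : expval (O * O) ψ - expval O ψ ^ 2 = ‖α‖ ^ 2 * ‖β‖ ^ 2 * (lam n - lam m) ^ 2 := by
    rw [hE (O * O) (fun t => lam t ^ 2) (hOsqEig hφmEig) (hOsqEig hφnEig),
      hE O lam hφmEig hφnEig]
    exact two_point_variance _ _ hαβ
  refine ⟨?_, hvar⟩
  have hcost : ∑ x ∈ Ico 1 J, (lam x - lam (x - 1)) / 2 * √(1 - expval (Xi x) ψ ^ 2)
      = √(‖α‖ ^ 2 * ‖β‖ ^ 2) * (lam n - lam m) := by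
    rw [← sum_sqrt_one_sub_sq_two_point lam (sq_nonneg _) (sq_nonneg _) hαβ hmn hn]
    refine sum_congr rfl fun x hx => ?_
    rw [hE (Xi x) (reflectionEigenvalue · x)
      (hXiEig (hmn.trans_lt hn) hφmEig x (mem_Ico.mp hx).2.le)
      (hXiEig hn hφnEig x (mem_Ico.mp hx).2.le)]
  rw [expval, expval] at hvar
  rw [hvar, hcost, mul_pow, Real.sq_sqrt (by positivity)]

/-- Saturation part of **Lemma 4**: for a Hermitian `O` with distinct eigenvalues
`λ₀ < ... < λ_{J−1}`, spectral projectors `Π_j`, reflections `Ξ_x = I − 2∑_{j<x} Π_j`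
and coefficients `c_x = (λ_x − λ_{x−1})/2`, and a unit state `ψ = α·φ_m + β·φ_n`
supported on at most two eigenspaces (`|α|² + |β|² = 1`, `m ≤ n`), the
optimal-allocation cost of the Ξ-decomposition equals the von Neumann variance:
`(∑_{x=1}^{J−1} c_x √(1 − ⟨ψ, Ξ_x ψ⟩²))² = ⟨ψ, O² ψ⟩ − ⟨ψ, O ψ⟩²
  = |α|²·|β|²·(λ_n − λ_m)²`. -/
theorem stmt_15 {d : ℕ} (J : ℕ) (hJ : 0 < J)
    (O : Matrix (Fin d) (Fin d) ℂ) (hO : O.IsHermitian)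
    (lam : ℕ → ℝ) (P : ℕ → Matrix (Fin d) (Fin d) ℂ)
    (hlam : ∀ j, j + 1 < J → lam j < lam (j + 1))
    (hPh : ∀ j < J, (P j).IsHermitian)
    (hPo : ∀ j < J, ∀ k < J, P j * P k = if j = k then P j else 0)
    (hPsum : ∑ j ∈ Finset.range J, P j = 1)
    (hOspec : O = ∑ j ∈ Finset.range J, lam j • P j)
    (Xi : ℕ → Matrix (Fin d) (Fin d) ℂ)
    (hXi : ∀ x, Xi x = 1 - 2 • ∑ j ∈ Finset.range x, P j)
    (m n : ℕ) (hmn : m ≤ n) (hn : n < J)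
    (φm φn : Fin d → ℂ)
    (hφm : star φm ⬝ᵥ φm = 1) (hφn : star φn ⬝ᵥ φn = 1)
    (hφmEig : O.mulVec φm = lam m • φm) (hφnEig : O.mulVec φn = lam n • φn)
    (α β : ℂ) (hαβ : ‖α‖ ^ 2 + ‖β‖ ^ 2 = 1)
    (ψ : Fin d → ℂ) (hψdef : ψ = α • φm + β • φn) (hψ : star ψ ⬝ᵥ ψ = 1) :
    (∑ x ∈ Finset.Ico 1 J,
        ((lam x - lam (x - 1)) / 2) * Real.sqrt (1 - expval (Xi x) ψ ^ 2)) ^ 2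
      = (star ψ ⬝ᵥ (O * O).mulVec ψ).re - (star ψ ⬝ᵥ O.mulVec ψ).re ^ 2 ∧
    (star ψ ⬝ᵥ (O * O).mulVec ψ).re - (star ψ ⬝ᵥ O.mulVec ψ).re ^ 2
      = ‖α‖ ^ 2 * ‖β‖ ^ 2 * (lam n - lam m) ^ 2 :=
  stmt_15_general J O hO lam P hlam hPo hPsum hOspec Xi hXi m n hmn hn φm φn hφm hφn hφmEig hφnEig α
    β hαβ ψ hψdef hψ
end

section
/- Let λ₀ < λ₁ < ... < λ_{J−1} be real numbers. Let X be a finite index set, with coefficients c_x > 0 and sign patterns ξ_{x,j} ∈ {+1, −1} (for x ∈ X, j ∈ {0, ..., J−1}) such that λ_j = ∑_{x} c_x·ξ_{x,j} for all j. Suppose that for all m < n the saturation condition ∑_x c_x·(1 − ξ_{x,m}·ξ_{x,n}) = λ_n − λ_m holds. Then for every x ∈ X, the sequence j ↦ ξ_{x,j} is monotone non-decreasing (i.e. there is a threshold t_x with ξ_{x,j} = −1 for j < t_x and ξ_{x,j} = +1 for j ≥ t_x). -/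
/-!
For signs `a, b ∈ {±1}` the quantity `(1 + a)(1 - b)` is nonnegative and vanishes unless
`a = 1, b = -1`. Expanding, `∑ₓ cₓ (1 + ξₓₘ)(1 - ξₓₙ) = ∑ₓ cₓ (1 - ξₓₘ ξₓₙ) - (λₙ - λₘ)`, which the
saturation condition makes zero; with `cₓ > 0` every summand vanishes, so no `ξₓ` drops from
`+1` at `m` to `-1` at a later `n`.
-/

lemma one_add_mul_one_sub_nonneg_of_signs {a b : ℝ} (ha : a = 1 ∨ a = -1)
    (hb : b = 1 ∨ b = -1) : 0 ≤ (1 + a) * (1 - b) := by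
  rcases ha with rfl | rfl <;> rcases hb with rfl | rfl <;> norm_num

lemma le_of_one_add_mul_one_sub_eq_zero_of_signs {a b : ℝ} (ha : a = 1 ∨ a = -1)
    (hb : b = 1 ∨ b = -1) (h : (1 + a) * (1 - b) = 0) : a ≤ b := by
  rcases ha with rfl | rfl <;> rcases hb with rfl | rfl <;> linarith

lemma le_of_sum_one_sub_mul_eq_sum_sub_sum {ι : Type*} [Fintype ι] {c a b : ι → ℝ}
    (hc : ∀ x, 0 < c x) (ha : ∀ x, a x = 1 ∨ a x = -1) (hb : ∀ x, b x = 1 ∨ b x = -1)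
    (hsat : ∑ x, c x * (1 - a x * b x) = ∑ x, c x * b x - ∑ x, c x * a x) (x : ι) :
    a x ≤ b x := by
  have hterm_nonneg : ∀ y ∈ Finset.univ, 0 ≤ c y * ((1 + a y) * (1 - b y)) := fun y _ =>
    mul_nonneg (hc y).le (one_add_mul_one_sub_nonneg_of_signs (ha y) (hb y))
  have hsum : ∑ y, c y * ((1 + a y) * (1 - b y)) = 0 := by
    calc ∑ y, c y * ((1 + a y) * (1 - b y))
        = ∑ y, c y * (1 - a y * b y) + ∑ y, c y * a y - ∑ y, c y * b y := by
          rw [← Finset.sum_add_distrib, ← Finset.sum_sub_distrib]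
          exact Finset.sum_congr rfl fun y _ => by ring
      _ = 0 := by rw [hsat]; ring
  have hx := (Finset.sum_eq_zero_iff_of_nonneg hterm_nonneg).mp hsum x (Finset.mem_univ x)
  exact le_of_one_add_mul_one_sub_eq_zero_of_signs (ha x) (hb x)
    ((mul_eq_zero.mp hx).resolve_left (hc x).ne')

theorem stmt_17_general {ι : Type*} [Fintype ι] (J : ℕ)
    (lam : ℕ → ℝ)
    (c : ι → ℝ) (hc : ∀ x, 0 < c x)
    (ξ : ι → ℕ → ℝ) (hξ : ∀ x, ∀ j < J, ξ x j = 1 ∨ ξ x j = -1)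
    (hrep : ∀ j < J, lam j = ∑ x, c x * ξ x j)
    (hsat : ∀ m n, m < n → n < J → ∑ x, c x * (1 - ξ x m * ξ x n) = lam n - lam m) :
    ∀ x, ∀ m n, m ≤ n → n < J → ξ x m ≤ ξ x n := by
  intro x m n hmn hnJ
  obtain rfl | hlt := hmn.eq_or_lt
  · exact le_rfl
  have hmJ : m < J := hlt.trans hnJ
  refine le_of_sum_one_sub_mul_eq_sum_sub_sum hc (fun y => hξ y m hmJ) (fun y => hξ y n hnJ) ?_ x
  rw [hsat m n hlt hnJ, hrep m hmJ, hrep n hnJ]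

/-- Uniqueness part of **Lemma 4**: let `λ₀ < λ₁ < ... < λ_{J−1}` be real numbers,
`c_x > 0` coefficients and `ξ_{x,j} ∈ {±1}` sign patterns with `λ_j = ∑_x c_x ξ_{x,j}`.
If the saturation condition `∑_x c_x (1 − ξ_{x,m} ξ_{x,n}) = λ_n − λ_m` holds for all
`m < n < J`, then every sequence `j ↦ ξ_{x,j}` is monotone non-decreasing on
`{0, ..., J−1}` (i.e. each `ξ_x` is a threshold/step pattern). -/
theorem stmt_17 {ι : Type*} [Fintype ι] (J : ℕ)
    (lam : ℕ → ℝ) (hlam : ∀ j, j + 1 < J → lam j < lam (j + 1))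
    (c : ι → ℝ) (hc : ∀ x, 0 < c x)
    (ξ : ι → ℕ → ℝ) (hξ : ∀ x, ∀ j < J, ξ x j = 1 ∨ ξ x j = -1)
    (hrep : ∀ j < J, lam j = ∑ x, c x * ξ x j)
    (hsat : ∀ m n, m < n → n < J → ∑ x, c x * (1 - ξ x m * ξ x n) = lam n - lam m) :
    ∀ x, ∀ m n, m ≤ n → n < J → ξ x m ≤ ξ x n :=
  stmt_17_general J lam c hc ξ hξ hrep hsat
end
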